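/- Let X and Y be partially ordered sets and let φ : X → Y be an order embedding. Then the restriction of φ^# to the cuts of X is an order isomorphic embedding into the cuts of Y, with both ordered by inclusion: for all cuts A, B of X, A ⊆ B if and only if φ^#(A) ⊆ φ^#(B), and φ^# is injective on cuts of X. -/

import Mathlib

/-- `ul A = (A^u)^l`: the lower bounds of the set of upper bounds of `A`. -/
def ul {X : Type*} [PartialOrder X] (A : Set X) : Set X :=
  lowerBounds (upperBounds A)

/-- `A` is a cut if `A^{ul} = A`. -/
def IsCut {X : Type*} [PartialOrder X] (A : Set X) : Prop :=
  ul A = A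

/-- `φ^#(A) = (φ(A))^{ul}`. -/
def sharp {X Y : Type*} [PartialOrder X] [PartialOrder Y] (φ : X → Y) (A : Set X) : Set Y :=
  ul (φ '' A)

/-!
Monotonicity of `φ^#` is immediate. Conversely, an order embedding maps upper bounds of `A` to
upper bounds of `φ(A)` and reflects `≤`, so `φ⁻¹(φ^#(A)) ⊆ A^{ul}`; hence `φ^#(A) ⊆ φ^#(B)` gives
`A ⊆ φ⁻¹(φ^#(B)) ⊆ B^{ul} = B` whenever `B` is a cut.
-/

section Cuts

variable {X Y : Type*} [PartialOrder X] [PartialOrder Y]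

theorem ul_mono {A B : Set X} (h : A ⊆ B) : ul A ⊆ ul B :=
  lowerBounds_mono_set (upperBounds_mono_set h)

theorem subset_ul (A : Set X) : A ⊆ ul A :=
  subset_lowerBounds_upperBounds A

theorem sharp_mono (φ : X → Y) {A B : Set X} (h : A ⊆ B) : sharp φ A ⊆ sharp φ B :=
  ul_mono (Set.image_mono h)

theorem subset_preimage_sharp (φ : X → Y) (A : Set X) : A ⊆ φ ⁻¹' sharp φ A :=
  Set.image_subset_iff.mp (subset_ul _)

theorem preimage_sharp_subset_ul {φ : X → Y} (hφ : ∀ a b : X, φ a ≤ φ b ↔ a ≤ b) (A : Set X) :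
    φ ⁻¹' sharp φ A ⊆ ul A := by
  have hmono : Monotone φ := fun a b hab => (hφ a b).mpr hab
  intro a ha u hu
  exact (hφ a u).mp (ha (hmono.mem_upperBounds_image hu))

theorem sharp_subset_sharp_iff {φ : X → Y} (hφ : ∀ a b : X, φ a ≤ φ b ↔ a ≤ b)
    {A B : Set X} (hB : IsCut B) : sharp φ A ⊆ sharp φ B ↔ A ⊆ B := by
  refine ⟨fun h => ?_, sharp_mono φ⟩
  calc A ⊆ φ ⁻¹' sharp φ A := subset_preimage_sharp φ A
    _ ⊆ φ ⁻¹' sharp φ B := Set.preimage_mono h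
    _ ⊆ ul B := preimage_sharp_subset_ul hφ B
    _ = B := hB

end Cuts

theorem stmt15 {X Y : Type*} [PartialOrder X] [PartialOrder Y] (φ : X → Y)
    (hφ : ∀ a b : X, φ a ≤ φ b ↔ a ≤ b) :
    (∀ A B : Set X, IsCut A → IsCut B → (A ⊆ B ↔ sharp φ A ⊆ sharp φ B)) ∧
      Set.InjOn (sharp φ) {A : Set X | IsCut A} :=
  ⟨fun _ _ _ hB => (sharp_subset_sharp_iff hφ hB).symm,
    fun _ hA _ hB h =>
      ((sharp_subset_sharp_iff hφ hB).mp h.le).antisymm ((sharp_subset_sharp_iff hφ hA).mp h.ge)⟩
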